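/- Let hᵢ : Sⁿ⁻¹ → (0,∞) be continuous functions converging uniformly to h : Sⁿ⁻¹ → (0,∞). Then the Wulff shapes A[hᵢ] converge to A[h] in the Hausdorff metric. -/

import Mathlib

open Real Set Filter
open scoped RealInnerProductSpace

/-- The Wulff shape of a function `h` on the sphere. -/
def wulff {n : ℕ} (h : EuclideanSpace ℝ (Fin n) → ℝ) : Set (EuclideanSpace ℝ (Fin n)) :=
  ⋂ u ∈ Metric.sphere (0 : EuclideanSpace ℝ (Fin n)) 1, {x | ⟪x, u⟫ ≤ h u}

/-!
Uniform convergence `fᵢ → h` with `h ≥ m > 0` on the sphere gives `(1 - t) h ≤ fᵢ ≤ (1 + t) h`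
eventually, for every `t > 0`. Since `A[c h] = c A[h]`, this squeezes `A[fᵢ]` between
`(1 - t) A[h]` and `(1 + t) A[h]`, and a body `L ⊆ R B` is within Hausdorff distance `t R` of
anything so squeezed around it.
-/

open Metric
open scoped Pointwise

theorem Metric.hausdorffDist_le_of_smul_subset {E : Type*} [NormedAddCommGroup E]
    [NormedSpace ℝ E] {K L : Set E} {t R : ℝ} (ht : 0 ≤ t) (hR : 0 ≤ R)
    (hL : ∀ x ∈ L, ‖x‖ ≤ R) (hLK : (1 - t) • L ⊆ K) (hKL : K ⊆ (1 + t) • L) :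
    hausdorffDist K L ≤ t * R := by
  refine hausdorffDist_le_of_infDist (mul_nonneg ht hR) ?_ ?_
  · intro y hy
    obtain ⟨x, hx, rfl⟩ := hKL hy
    calc infDist ((1 + t) • x) L ≤ dist ((1 + t) • x) x := infDist_le_dist_of_mem hx
      _ = t * ‖x‖ := by
        rw [dist_eq_norm, add_smul, one_smul, add_sub_cancel_left, norm_smul, norm_of_nonneg ht]
      _ ≤ t * R := by gcongr; exact hL x hx
  · intro x hx
    calc infDist x K ≤ dist x ((1 - t) • x) :=
          infDist_le_dist_of_mem (hLK (smul_mem_smul_set hx))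
      _ = t * ‖x‖ := by
        rw [dist_eq_norm, sub_smul, one_smul, sub_sub_cancel, norm_smul, norm_of_nonneg ht]
      _ ≤ t * R := by gcongr; exact hL x hx

section Wulff

variable {n : ℕ} {g h : EuclideanSpace ℝ (Fin n) → ℝ}

theorem mem_wulff_iff {x : EuclideanSpace ℝ (Fin n)} :
    x ∈ wulff h ↔ ∀ u ∈ sphere (0 : EuclideanSpace ℝ (Fin n)) 1, ⟪x, u⟫ ≤ h u := by
  simp [wulff]

theorem wulff_mono (hgh : ∀ u ∈ sphere (0 : EuclideanSpace ℝ (Fin n)) 1, g u ≤ h u) :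
    wulff g ⊆ wulff h := fun _ hx ↦
  mem_wulff_iff.2 fun u hu ↦ (mem_wulff_iff.1 hx u hu).trans (hgh u hu)

theorem smul_wulff {c : ℝ} (hc : 0 < c) : c • wulff h = wulff (c • h) := by
  ext x
  rw [mem_smul_set_iff_inv_smul_mem₀ hc.ne', mem_wulff_iff, mem_wulff_iff]
  refine forall₂_congr fun u _ ↦ ?_
  rw [real_inner_smul_left, Pi.smul_apply, smul_eq_mul, inv_mul_le_iff₀ hc]

theorem norm_le_of_mem_wulff {R : ℝ} (hR : 0 ≤ R)
    (hhR : ∀ u ∈ sphere (0 : EuclideanSpace ℝ (Fin n)) 1, h u ≤ R)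
    {x : EuclideanSpace ℝ (Fin n)} (hx : x ∈ wulff h) : ‖x‖ ≤ R := by
  rcases eq_or_ne x 0 with rfl | hx0
  · simpa using hR
  have hu : ‖x‖⁻¹ • x ∈ sphere (0 : EuclideanSpace ℝ (Fin n)) 1 := by
    simp [norm_smul, hx0]
  calc ‖x‖ = ⟪x, ‖x‖⁻¹ • x⟫ := by
        rw [real_inner_smul_right, real_inner_self_eq_norm_sq]
        field_simp
    _ ≤ h (‖x‖⁻¹ • x) := mem_wulff_iff.1 hx _ hu
    _ ≤ R := hhR _ hu

theorem hausdorffDist_wulff_le {t R : ℝ} (ht₀ : 0 ≤ t) (ht₁ : t < 1) (hR : 0 ≤ R)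
    (hhR : ∀ u ∈ sphere (0 : EuclideanSpace ℝ (Fin n)) 1, h u ≤ R)
    (hgh : ∀ u ∈ sphere (0 : EuclideanSpace ℝ (Fin n)) 1, |g u - h u| ≤ t * h u) :
    hausdorffDist (wulff g) (wulff h) ≤ t * R := by
  refine hausdorffDist_le_of_smul_subset ht₀ hR (fun _ ↦ norm_le_of_mem_wulff hR hhR) ?_ ?_
  · rw [smul_wulff (by linarith)]
    exact wulff_mono fun u hu ↦ by
      simp only [Pi.smul_apply, smul_eq_mul]
      linarith [(abs_le.1 (hgh u hu)).1]
  · rw [smul_wulff (by linarith)]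
    exact wulff_mono fun u hu ↦ by
      simp only [Pi.smul_apply, smul_eq_mul]
      linarith [(abs_le.1 (hgh u hu)).2]

end Wulff

theorem tendsto_nhds_zero_of_forall_eventually_le_mul {α : Type*} {l : Filter α} {d : α → ℝ}
    {C : ℝ} (hd : ∀ i, 0 ≤ d i) (H : ∀ t ∈ Ioo (0 : ℝ) 1, ∀ᶠ i in l, d i ≤ t * C) :
    Tendsto d l (nhds 0) := by
  refine tendsto_order.2 ⟨fun a ha ↦ .of_forall fun i ↦ ha.trans_le (hd i), fun δ hδ ↦ ?_⟩
  have hsmall : ∀ᶠ t in nhdsWithin (0 : ℝ) (Ioi 0), t * C < δ :=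
    (tendsto_nhdsWithin_of_tendsto_nhds (tendsto_id.mul_const C)).eventually
      (gt_mem_nhds (by simpa using hδ))
  obtain ⟨t, htC, ht⟩ := (hsmall.and (Ioo_mem_nhdsGT one_pos)).exists
  exact (H t ht).mono fun i hi ↦ hi.trans_lt htC

theorem wulff_continuous_general {n : ℕ}
    (f : ℕ → EuclideanSpace ℝ (Fin n) → ℝ) (h : EuclideanSpace ℝ (Fin n) → ℝ)
    (hc : ContinuousOn h (Metric.sphere (0 : EuclideanSpace ℝ (Fin n)) 1))
    (hpos : ∀ u ∈ Metric.sphere (0 : EuclideanSpace ℝ (Fin n)) 1, 0 < h u)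
    (hunif : TendstoUniformlyOn f h atTop
      (Metric.sphere (0 : EuclideanSpace ℝ (Fin n)) 1)) :
    Tendsto (fun i => Metric.hausdorffDist (wulff (f i)) (wulff h)) atTop (nhds 0) := by
  have hS := isCompact_sphere (0 : EuclideanSpace ℝ (Fin n)) 1
  obtain ⟨m, hm, hmh⟩ := hS.exists_forall_le' hc hpos
  obtain ⟨R, hR⟩ := hS.bddAbove_image hc
  have hhR : ∀ u ∈ sphere (0 : EuclideanSpace ℝ (Fin n)) 1, h u ≤ max R 0 :=
    fun u hu ↦ (hR (mem_image_of_mem h hu)).trans (le_max_left R 0)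
  refine tendsto_nhds_zero_of_forall_eventually_le_mul (C := max R 0)
    (fun _ ↦ hausdorffDist_nonneg) ?_
  rintro t ⟨ht₀, ht₁⟩
  filter_upwards [tendstoUniformlyOn_iff.1 hunif (t * m) (by positivity)] with i hi
  refine hausdorffDist_wulff_le ht₀.le ht₁ (le_max_right R 0) hhR fun u hu ↦ ?_
  calc |f i u - h u| = dist (h u) (f i u) := by rw [dist_comm, Real.dist_eq]
    _ ≤ t * m := (hi u hu).le
    _ ≤ t * h u := by gcongr; exact hmh u hu

/-- Wulff shapes of uniformly convergent positive continuous functions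
converge in the Hausdorff metric. -/
theorem wulff_continuous {n : ℕ} (hn : 0 < n)
    (f : ℕ → EuclideanSpace ℝ (Fin n) → ℝ) (h : EuclideanSpace ℝ (Fin n) → ℝ)
    (hfc : ∀ i, ContinuousOn (f i) (Metric.sphere (0 : EuclideanSpace ℝ (Fin n)) 1))
    (hfpos : ∀ i, ∀ u ∈ Metric.sphere (0 : EuclideanSpace ℝ (Fin n)) 1, 0 < f i u)
    (hc : ContinuousOn h (Metric.sphere (0 : EuclideanSpace ℝ (Fin n)) 1))
    (hpos : ∀ u ∈ Metric.sphere (0 : EuclideanSpace ℝ (Fin n)) 1, 0 < h u)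
    (hunif : TendstoUniformlyOn f h atTop
      (Metric.sphere (0 : EuclideanSpace ℝ (Fin n)) 1)) :
    Tendsto (fun i => Metric.hausdorffDist (wulff (f i)) (wulff h)) atTop (nhds 0) :=
  wulff_continuous_general f h hc hpos hunif
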